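/- Let H be a finite dimensional C*-Hopf algebra with Haar projection e ∈ H and Haar projection τ ∈ H⁰ (dim H = N). Then for any h ∈ H and φ ∈ H⁰: N (φτ₍₁₎)(e) τ₍₂₎(S(h)) = φ(h), where S is the antipode of H and subscripts denote the comultiplication of H⁰ in Sweedler notation. -/

import Mathlib

open TensorProduct BigOperators

noncomputable section

variable {H : Type*} [Ring H] [HopfAlgebra ℂ H] [StarRing H] [StarModule ℂ H]
  [FiniteDimensional ℂ H]

/-- The convolution product on the dual `H⁰ = H*` of a Hopf algebra:
`(φψ)(h) = φ(h₍₁₎)ψ(h₍₂₎)`. -/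
def dConv (φ ψ : Module.Dual ℂ H) : Module.Dual ℂ H :=
  LinearMap.mul' ℂ ℂ ∘ₗ TensorProduct.map φ ψ ∘ₗ (Coalgebra.comul (R := ℂ))

/-!
With `e₍₁₎ ⊗ e₍₂₎ = Δ(e)`, the sum on the left is `N φ(e₍₁₎) τ(e₍₂₎ S(h))`. Since `e` is a right
integral (`e x = ε(x) e`), `Δ(e)(1 ⊗ S(h)) = Δ(e h₍₁₎)(1 ⊗ S(h₍₂₎)) = Δ(e)(h₍₁₎ ⊗ h₍₂₎S(h₍₃₎))
= Δ(e)(h ⊗ 1)`, so the sum equals `N φ(e₍₁₎h) τ(e₍₂₎)`. Right invariance of `τ` gives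
`e₍₁₎ τ(e₍₂₎) = τ(e) 1`, and `N τ(e) = 1`.
-/

open Coalgebra HopfAlgebra

theorem TensorProduct.map_mul_tmul {R A B M N : Type*} [CommSemiring R] [Semiring A]
    [Algebra R A] [Semiring B] [Algebra R B] [AddCommMonoid M] [Module R M]
    [AddCommMonoid N] [Module R N] (f : A →ₗ[R] M) (g : B →ₗ[R] N) (X : A ⊗[R] B)
    (a : A) (b : B) :
    map f g (X * (a ⊗ₜ b)) =
      map (f ∘ₗ LinearMap.mulRight R a) (g ∘ₗ LinearMap.mulRight R b) X := by
  induction X using TensorProduct.induction_on with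
  | zero => simp
  | tmul x y => simp
  | add x y hx hy => simp [add_mul, hx, hy]

namespace HopfAlgebra

variable {R A : Type*} [CommSemiring R] [Semiring A] [HopfAlgebra R A]

theorem sum_comul_mul_one_tmul_antipode {ι : Type*} {h : A} (𝓡 : Repr R h ι) :
    ∑ i ∈ 𝓡.index, comul (𝓡.left i) * (1 ⊗ₜ[R] antipode R (𝓡.right i)) = h ⊗ₜ[R] 1 := by
  have hcoassoc := congr(LinearMap.lTensor A (LinearMap.mul' R A ∘ₗ (antipode R).lTensor A) $(
    sum_tmul_tmul_eq 𝓡 (fun i ↦ ℛ R (𝓡.left i)) (fun i ↦ ℛ R (𝓡.right i))))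
  simp only [map_sum, LinearMap.lTensor_tmul, LinearMap.coe_comp, Function.comp_apply,
    LinearMap.mul'_apply, ← tmul_sum, sum_mul_antipode_eq_algebraMap_counit] at hcoassoc
  have hcounit := congr(LinearMap.lTensor A (Algebra.linearMap R A) $(sum_tmul_counit_eq 𝓡))
  simp only [map_sum, LinearMap.lTensor_tmul, Algebra.linearMap_apply, map_one] at hcounit
  rw [← hcounit, ← hcoassoc]
  refine Finset.sum_congr rfl fun i _ ↦ ?_
  simp [← (ℛ R (𝓡.left i)).eq, Finset.sum_mul]

theorem comul_mul_one_tmul_antipode_of_mul_eq_counit_smul {Λ : A}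
    (hΛ : ∀ x : A, Λ * x = counit (R := R) x • Λ) (h : A) :
    comul Λ * (1 ⊗ₜ[R] antipode R h) = comul Λ * (h ⊗ₜ[R] 1) := by
  let 𝓡 := ℛ R h
  calc comul Λ * (1 ⊗ₜ[R] antipode R h)
      = ∑ i ∈ 𝓡.index, comul (Λ * 𝓡.left i) * (1 ⊗ₜ[R] antipode R (𝓡.right i)) := by
        conv_lhs => rw [← sum_counit_smul 𝓡]
        simp [hΛ, tmul_sum, Finset.mul_sum]
    _ = comul Λ * (h ⊗ₜ[R] 1) := by
        simp only [Bialgebra.comul_mul, mul_assoc, ← Finset.mul_sum,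
          sum_comul_mul_one_tmul_antipode]

theorem mul'_map_comp_mulRight_antipode_comul {Λ : A}
    (hΛ : ∀ x : A, Λ * x = counit (R := R) x • Λ) {τ : A →ₗ[R] R}
    (hτ : ∀ ψ : A →ₗ[R] R, LinearMap.mul' R R ∘ₗ map ψ τ ∘ₗ comul = ψ 1 • τ)
    (φ : A →ₗ[R] R) (h : A) :
    LinearMap.mul' R R (map φ (τ ∘ₗ LinearMap.mulRight R (antipode R h)) (comul Λ)) =
      τ Λ * φ h := by
  calc _ = LinearMap.mul' R R (map φ τ (comul Λ * (1 ⊗ₜ[R] antipode R h))) := by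
        rw [map_mul_tmul, LinearMap.mulRight_one, LinearMap.comp_id]
    _ = LinearMap.mul' R R (map (φ ∘ₗ LinearMap.mulRight R h) τ (comul Λ)) := by
        rw [comul_mul_one_tmul_antipode_of_mul_eq_counit_smul hΛ, map_mul_tmul,
          LinearMap.mulRight_one, LinearMap.comp_id]
    _ = τ Λ * φ h := by
        simpa [mul_comm] using congr($(hτ (φ ∘ₗ LinearMap.mulRight R h)) Λ)

end HopfAlgebra

theorem haar_expansion_general
    (e : H) (τ : Module.Dual ℂ H)
    -- `e` is the distinguished projection of `H`
    (heHaar' : ∀ h : H, e * h = (Coalgebra.counit (R := ℂ) h : ℂ) • e)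
    -- `τ` is the distinguished projection of `H⁰` (the Haar trace on `H`)
    (hτHaar : ∀ φ : Module.Dual ℂ H, dConv φ τ = φ 1 • τ)
    -- normalization relating the two Haar projections: `N τ(e) = 1`
    (hnorm : (Module.finrank ℂ H : ℂ) * τ e = 1)
    -- a Sweedler decomposition `Δ⁰(τ) = ∑ i, τ1 i ⊗ τ2 i` of the dual comultiplication of `τ`
    (m : ℕ) (τ1 τ2 : Fin m → Module.Dual ℂ H)
    (hτΔ : ∀ a b : H, τ (a * b) = ∑ i, τ1 i a * τ2 i b)
    (h : H) (φ : Module.Dual ℂ H) :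
    (Module.finrank ℂ H : ℂ) *
        ∑ i, (dConv φ (τ1 i)) e * τ2 i (HopfAlgebra.antipode (R := ℂ) h) = φ h := by
  have hτ_mulRight :
      ∑ i, τ2 i (antipode ℂ h) • τ1 i = τ ∘ₗ LinearMap.mulRight ℂ (antipode ℂ h) := by
    ext a
    simp [hτΔ, mul_comm]
  have hconv : ∑ i, dConv φ (τ1 i) e * τ2 i (antipode ℂ h) =
      LinearMap.mul' ℂ ℂ (map φ (∑ i, τ2 i (antipode ℂ h) • τ1 i) (comul e)) := by
    simp only [dConv, LinearMap.coe_comp, Function.comp_apply, ← (ℛ ℂ e).eq, map_sum, map_tmul,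
      LinearMap.mul'_apply, Finset.sum_mul, LinearMap.coe_sum, LinearMap.coe_smul,
      Finset.sum_apply, Pi.smul_apply, smul_eq_mul, Finset.mul_sum]
    rw [Finset.sum_comm]
    exact Finset.sum_congr rfl fun _ _ ↦ Finset.sum_congr rfl fun _ _ ↦ by ring
  rw [hconv, hτ_mulRight, mul'_map_comp_mulRight_antipode_comul heHaar' hτHaar, ← mul_assoc,
    hnorm, one_mul]

/-- Let `H` be a finite dimensional C*-Hopf algebra with Haar (distinguished)
projection `e ∈ H` and Haar projection `τ ∈ H⁰`, `N = dim H`.  Writing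
`Δ⁰(τ) = ∑ i, τ1 i ⊗ τ2 i` (Sweedler decomposition of the comultiplication of the dual,
i.e. `τ(ab) = ∑ i, τ1 i (a) * τ2 i (b)`), one has for any `h ∈ H` and `φ ∈ H⁰`:
`N • ∑ i (φ τ₍₁₎)(e) τ₍₂₎(S(h)) = φ(h)`. -/
theorem haar_expansion
    (e : H) (τ : Module.Dual ℂ H)
    -- `e` is the distinguished projection of `H`
    (he_idem : e * e = e) (he_star : star e = e)
    (heHaar : ∀ h : H, h * e = (Coalgebra.counit (R := ℂ) h : ℂ) • e)
    (heHaar' : ∀ h : H, e * h = (Coalgebra.counit (R := ℂ) h : ℂ) • e)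
    -- `τ` is the distinguished projection of `H⁰` (the Haar trace on `H`)
    (hτ_idem : dConv τ τ = τ)
    (hτHaar : ∀ φ : Module.Dual ℂ H, dConv φ τ = φ 1 • τ)
    (hτHaar' : ∀ φ : Module.Dual ℂ H, dConv τ φ = φ 1 • τ)
    (hτtrace : ∀ a b : H, τ (a * b) = τ (b * a))
    -- normalization relating the two Haar projections: `N τ(e) = 1`
    (hnorm : (Module.finrank ℂ H : ℂ) * τ e = 1)
    -- a Sweedler decomposition `Δ⁰(τ) = ∑ i, τ1 i ⊗ τ2 i` of the dual comultiplication of `τ`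
    (m : ℕ) (τ1 τ2 : Fin m → Module.Dual ℂ H)
    (hτΔ : ∀ a b : H, τ (a * b) = ∑ i, τ1 i a * τ2 i b)
    (h : H) (φ : Module.Dual ℂ H) :
    (Module.finrank ℂ H : ℂ) *
        ∑ i, (dConv φ (τ1 i)) e * τ2 i (HopfAlgebra.antipode (R := ℂ) h) = φ h :=
  haar_expansion_general e τ heHaar' hτHaar hnorm m τ1 τ2 hτΔ h φ
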